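/- Let V be a multiplicative unitary of multiplicity 1 on a finite-dimensional Hilbert space H, and let ψ be a state on L(H) such that L(ψ) = (ψ⊗id)(V) is an idempotent. Then V(L(ψ)e ⊗ L(ψ)e) = L(ψ)e ⊗ L(ψ)e, where e is the fixed unit vector. -/

import Mathlib

/-!
Write `P = L(ψ)` and `f = P e`, so that `P f = f`. Evaluating
`V (P ⊗ 1) V* = (ψ ⊗ id ⊗ id)(V₁₂ V₁₃)` on `e ⊗ η`, which `V*` fixes, gives
`⟪ξ ⊗ ζ, V (P e ⊗ η)⟫ = ψ (ρ(ω_{ξ,e}) ρ(ω_{ζ,η}))`, where `ρ(ω) = (id ⊗ ω)(V)` is `Rslice`.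
The element `G = ρ(ω_{f,f})` has `‖G‖ ≤ ‖f‖²` and `ψ G = ⟪f, P f⟫ = ‖f‖²`, so the state `ψ`
attains its norm at `G`; by Cauchy–Schwarz for `ψ` this forces `ψ (a G) = ‖f‖² ψ a` for all `a`.
With `a = ρ(ω_{f,e})`, `ψ a = ⟪f, P e⟫ = ‖f‖²`, hence `⟪f ⊗ f, V (f ⊗ f)⟫ = ‖f ⊗ f‖²`, and since
`V` is isometric this means `V (f ⊗ f) = f ⊗ f`.
-/

open scoped InnerProductSpace ComplexOrder

noncomputable section

namespace MU

variable {ι : Type*} [Fintype ι] [DecidableEq ι]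

/-- The elementary tensor `f ⊗ g` of two vectors, in the model
`H ⊗ H = EuclideanSpace ℂ (ι × ι)`. -/
def tens (f g : EuclideanSpace ℂ ι) : EuclideanSpace ℂ (ι × ι) :=
  WithLp.toLp 2 (fun p => f p.1 * g p.2)

/-- `g ↦ f ⊗ g` as a linear map. -/
def tensL (f : EuclideanSpace ℂ ι) :
    EuclideanSpace ℂ ι →ₗ[ℂ] EuclideanSpace ℂ (ι × ι) where
  toFun g := tens f g
  map_add' x y := PiLp.ext fun p => by
    simp only [tens, PiLp.add_apply]; ring
  map_smul' c x := PiLp.ext fun p => by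
    simp only [tens, PiLp.smul_apply, smul_eq_mul, RingHom.id_apply]; ring

/-- `f ↦ f ⊗ g` as a linear map. -/
def tensR (g : EuclideanSpace ℂ ι) :
    EuclideanSpace ℂ ι →ₗ[ℂ] EuclideanSpace ℂ (ι × ι) where
  toFun f := tens f g
  map_add' x y := PiLp.ext fun p => by
    simp only [tens, PiLp.add_apply]; ring
  map_smul' c x := PiLp.ext fun p => by
    simp only [tens, PiLp.smul_apply, smul_eq_mul, RingHom.id_apply]; ring

/-- Action of a matrix on a Euclidean space vector. -/
def appM {κ : Type*} [Fintype κ] (M : Matrix κ κ ℂ) (v : EuclideanSpace ℂ κ) :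
    EuclideanSpace ℂ κ :=
  WithLp.toLp 2 (fun i => ∑ j, M i j * v j)

/-- Action of a matrix as a linear map on the Euclidean space. -/
def mact {κ : Type*} [Fintype κ] (M : Matrix κ κ ℂ) :
    EuclideanSpace ℂ κ →ₗ[ℂ] EuclideanSpace ℂ κ where
  toFun := appM M
  map_add' x y := PiLp.ext fun i => by
    simp only [appM, PiLp.add_apply, mul_add, Finset.sum_add_distrib]
  map_smul' c x := PiLp.ext fun i => by
    simp only [appM, PiLp.smul_apply, smul_eq_mul, RingHom.id_apply, Finset.mul_sum]
    refine Finset.sum_congr rfl fun j _ => ?_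
    ring

/-- The leg `V₁₂` on `H ⊗ H ⊗ H`. -/
def leg12 (V : Matrix (ι × ι) (ι × ι) ℂ) : Matrix (ι × ι × ι) (ι × ι × ι) ℂ :=
  fun p q => V (p.1, p.2.1) (q.1, q.2.1) * (if p.2.2 = q.2.2 then 1 else 0)

/-- The leg `V₁₃` on `H ⊗ H ⊗ H`. -/
def leg13 (V : Matrix (ι × ι) (ι × ι) ℂ) : Matrix (ι × ι × ι) (ι × ι × ι) ℂ :=
  fun p q => V (p.1, p.2.2) (q.1, q.2.2) * (if p.2.1 = q.2.1 then 1 else 0)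

/-- The leg `V₂₃` on `H ⊗ H ⊗ H`. -/
def leg23 (V : Matrix (ι × ι) (ι × ι) ℂ) : Matrix (ι × ι × ι) (ι × ι × ι) ℂ :=
  fun p q => V (p.2.1, p.2.2) (q.2.1, q.2.2) * (if p.1 = q.1 then 1 else 0)

/-- The pentagon equation `V₁₂ V₁₃ V₂₃ = V₂₃ V₁₂`. -/
def Pentagon (V : Matrix (ι × ι) (ι × ι) ℂ) : Prop :=
  leg12 V * leg13 V * leg23 V = leg23 V * leg12 V

/-- `V` is a multiplicative unitary: a unitary satisfying the pentagon equation. -/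
def IsMU (V : Matrix (ι × ι) (ι × ι) ℂ) : Prop :=
  V * V.conjTranspose = 1 ∧ V.conjTranspose * V = 1 ∧ Pentagon V

/-- `ξ` is a fixed vector for `V`. -/
def Fixed (V : Matrix (ι × ι) (ι × ι) ℂ) (ξ : EuclideanSpace ℂ ι) : Prop :=
  ∀ η, mact V (tens ξ η) = tens ξ η

/-- `ξ` is a cofixed vector for `V`. -/
def Cofixed (V : Matrix (ι × ι) (ι × ι) ℂ) (ξ : EuclideanSpace ℂ ι) : Prop :=
  ∀ η, mact V (tens η ξ) = tens η ξ

/-- `V` has multiplicity 1, with fixed unit vector `e` and cofixed unit vector `eHat`. -/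
def Mult1 (V : Matrix (ι × ι) (ι × ι) ℂ) (e eHat : EuclideanSpace ℂ ι) : Prop :=
  ‖e‖ = 1 ∧ ‖eHat‖ = 1 ∧ Fixed V e ∧ Cofixed V eHat ∧
    (∀ ξ, Fixed V ξ → ∃ c : ℂ, ξ = c • e) ∧
    (∀ ξ, Cofixed V ξ → ∃ c : ℂ, ξ = c • eHat)

/-- A pre-subgroup of `V` (with fixed vector `e`): a unit vector `f` with
`⟨f,e⟩ > 0` and `V(f⊗f) = f⊗f`. -/
def IsPreSubgroup (V : Matrix (ι × ι) (ι × ι) ℂ) (e f : EuclideanSpace ℂ ι) : Prop :=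
  ‖f‖ = 1 ∧ 0 < ⟪f, e⟫_ℂ ∧ mact V (tens f f) = tens f f

/-- The subspace `H^f = {η : V(f⊗η) = f⊗η}`. -/
def subUp (V : Matrix (ι × ι) (ι × ι) ℂ) (f : EuclideanSpace ℂ ι) :
    Submodule ℂ (EuclideanSpace ℂ ι) :=
  LinearMap.ker ((mact V).comp (tensL f) - tensL f)

/-- The subspace `H_f = {η : V(η⊗f) = η⊗f}`. -/
def subDown (V : Matrix (ι × ι) (ι × ι) ℂ) (f : EuclideanSpace ℂ ι) :
    Submodule ℂ (EuclideanSpace ℂ ι) :=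
  LinearMap.ker ((mact V).comp (tensR f) - tensR f)

/-- The slice `L(ω_{ξ,η}) = (ω_{ξ,η} ⊗ id)(V)`. -/
def Lslice (V : Matrix (ι × ι) (ι × ι) ℂ) (ξ η : EuclideanSpace ℂ ι) : Matrix ι ι ℂ :=
  fun a b => ∑ x, ∑ y, (starRingEnd ℂ) (ξ x) * η y * V (x, a) (y, b)

/-- The slice `ρ(ω_{ξ,η}) = (id ⊗ ω_{ξ,η})(V)`. -/
def Rslice (V : Matrix (ι × ι) (ι × ι) ℂ) (ξ η : EuclideanSpace ℂ ι) : Matrix ι ι ℂ :=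
  fun a b => ∑ x, ∑ y, (starRingEnd ℂ) (ξ x) * η y * V (a, x) (b, y)

/-- The slice `L(ω) = (ω ⊗ id)(V)` of a general linear functional `ω` on `L(H)`. -/
def LslF (V : Matrix (ι × ι) (ι × ι) ℂ) (ω : Matrix ι ι ℂ →ₗ[ℂ] ℂ) : Matrix ι ι ℂ :=
  fun a b => ω (fun x y => V (x, a) (y, b))

/-- A state on `L(H)`: a unital positive linear functional. -/
def IsState (ω : Matrix ι ι ℂ →ₗ[ℂ] ℂ) : Prop :=
  ω 1 = 1 ∧ ∀ M : Matrix ι ι ℂ, M.PosSemidef → ∃ r : ℝ, 0 ≤ r ∧ ω M = r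

end MU

open scoped MatrixOrder Matrix.Norms.L2Operator

namespace PositiveLinearMap
variable {A : Type*} [CStarAlgebra A] [PartialOrder A] [StarOrderedRing A]

lemma apply_mul_eq_zero_of_apply_star_mul_self_eq_zero (φ : A →ₚ[ℂ] ℂ) {c : A}
    (hc : φ (star c * c) = 0) (a : A) : φ (a * c) = 0 := by
  have hnorm : ‖φ.toPreGNS c‖ = 0 := by
    have h := φ.preGNS_norm_sq (φ.toPreGNS c)
    rw [ofPreGNS_toPreGNS, hc] at h
    exact_mod_cast pow_eq_zero_iff two_ne_zero |>.mp h
  have := norm_inner_le_norm (𝕜 := ℂ) (φ.toPreGNS (star a)) (φ.toPreGNS c)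
  rw [hnorm, mul_zero, norm_le_zero_iff, preGNS_inner_def] at this
  simpa using this

lemma apply_star_mul_self_le (φ : A →ₚ[ℂ] ℂ) (g : A) :
    φ (star g * g) ≤ (‖g‖ ^ 2 : ℝ) * φ 1 := by
  calc φ (star g * g) ≤ φ (algebraMap ℝ A (‖g‖ ^ 2)) :=
        φ.monotone' CStarAlgebra.star_mul_le_algebraMap_norm_sq
    _ = _ := by rw [Algebra.algebraMap_eq_smul_one, ← Complex.coe_smul, map_smul, smul_eq_mul]

lemma apply_mul_eq_of_norm_le (φ : A →ₚ[ℂ] ℂ) (hφ : φ 1 = 1) {g : A} {r : ℝ}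
    (hg : ‖g‖ ≤ r) (hφg : φ g = r) (a : A) : φ (a * g) = r * φ a := by
  have hφstar : φ (star g) = r := by rw [map_star, hφg, Complex.star_def, Complex.conj_ofReal]
  have hle : φ (star g * g) ≤ r ^ 2 := by
    refine (φ.apply_star_mul_self_le g).trans ?_
    rw [hφ, mul_one]
    exact_mod_cast pow_le_pow_left₀ (norm_nonneg g) hg 2
  have hc : φ (star (g - (r : ℂ) • 1) * (g - (r : ℂ) • 1)) = 0 := by
    refine le_antisymm ?_ (φ.map_nonneg (star_mul_self_nonneg _))
    simp only [star_sub, star_smul, star_one, sub_mul, mul_sub, smul_mul_assoc, mul_smul_comm,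
      one_mul, mul_one, map_sub, map_smul, hφ, hφg, hφstar, smul_eq_mul, Complex.star_def,
      Complex.conj_ofReal]
    linear_combination hle
  have := φ.apply_mul_eq_zero_of_apply_star_mul_self_eq_zero hc a
  rwa [mul_sub, map_sub, sub_eq_zero, mul_smul_comm, mul_one, map_smul, smul_eq_mul] at this

end PositiveLinearMap

lemma eq_of_norm_eq_of_inner_eq_norm_sq {E : Type*} [NormedAddCommGroup E] [InnerProductSpace ℂ E]
    {x y : E} (hn : ‖y‖ = ‖x‖) (hi : ⟪x, y⟫_ℂ = (‖x‖ ^ 2 : ℝ)) : y = x := by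
  have hre : RCLike.re ⟪y, x⟫_ℂ = ‖x‖ ^ 2 := by
    rw [← inner_conj_symm, hi, RCLike.conj_re]; exact Complex.ofReal_re _
  rw [← sub_eq_zero, ← norm_eq_zero, ← sq_eq_zero_iff, @norm_sub_sq ℂ, hre, hn]
  ring

namespace MU
variable {ι : Type*} [Fintype ι]

lemma appM_eq_toEuclideanLin {κ : Type*} [Fintype κ] [DecidableEq κ] (M : Matrix κ κ ℂ)
    (v : EuclideanSpace ℂ κ) :
    appM M v = M.toEuclideanLin v := rfl

lemma appM_mul [DecidableEq ι] (M N : Matrix ι ι ℂ) (v : EuclideanSpace ℂ ι) :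
    appM (M * N) v = appM M (appM N v) := by
  simp [appM_eq_toEuclideanLin]

lemma norm_mact_of_conjTranspose_mul_self {κ : Type*} [Fintype κ] [DecidableEq κ]
    {U : Matrix κ κ ℂ} (hU : U.conjTranspose * U = 1) (v : EuclideanSpace ℂ κ) :
    ‖mact U v‖ = ‖v‖ := by
  have : ‖mact U v‖ ^ 2 = ‖v‖ ^ 2 := by
    change ‖U.toEuclideanLin v‖ ^ 2 = _
    rw [@norm_sq_eq_re_inner ℂ, ← LinearMap.adjoint_inner_left,
      ← Matrix.toEuclideanLin_conjTranspose_eq_adjoint, @norm_sq_eq_re_inner ℂ]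
    simp [Matrix.toLpLin_apply, Matrix.mulVec_mulVec, hU]
  exact (pow_left_inj₀ (norm_nonneg _) (norm_nonneg _) two_ne_zero).mp this

lemma inner_tens_tens (ξ ζ ξ' ζ' : EuclideanSpace ℂ ι) :
    ⟪tens ξ ζ, tens ξ' ζ'⟫_ℂ = ⟪ξ, ξ'⟫_ℂ * ⟪ζ, ζ'⟫_ℂ := by
  simp only [tens, PiLp.inner_apply, RCLike.inner_apply, Fintype.sum_prod_type, Finset.sum_mul_sum]
  refine Finset.sum_congr rfl fun a _ => Finset.sum_congr rfl fun b _ => ?_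
  rw [map_mul]; ring

lemma norm_tens (ξ ζ : EuclideanSpace ℂ ι) : ‖tens ξ ζ‖ = ‖ξ‖ * ‖ζ‖ := by
  have : ‖tens ξ ζ‖ ^ 2 = (‖ξ‖ * ‖ζ‖) ^ 2 := by
    rw [@norm_sq_eq_re_inner ℂ, inner_tens_tens, inner_self_eq_norm_sq_to_K,
      inner_self_eq_norm_sq_to_K]
    norm_cast; ring
  exact (pow_left_inj₀ (norm_nonneg _) (by positivity) two_ne_zero).mp this

lemma inner_appM_rslice (V : Matrix (ι × ι) (ι × ι) ℂ) (ζ η u w : EuclideanSpace ℂ ι) :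
    ⟪u, appM (Rslice V ζ η) w⟫_ℂ = ⟪tens u ζ, mact V (tens w η)⟫_ℂ := by
  simp only [Rslice, appM, mact, tens, LinearMap.coe_mk, AddHom.coe_mk, PiLp.inner_apply,
    RCLike.inner_apply, Fintype.sum_prod_type, map_mul, Finset.sum_mul]
  refine Finset.sum_congr rfl fun a _ => ?_
  rw [Finset.sum_comm]
  refine Finset.sum_congr rfl fun x _ => Finset.sum_congr rfl fun b _ =>
    Finset.sum_congr rfl fun y _ => ?_
  ring

lemma rslice_eq_sum (V : Matrix (ι × ι) (ι × ι) ℂ) (ζ η : EuclideanSpace ℂ ι) :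
    Rslice V ζ η =
      ∑ x, ∑ y, (starRingEnd ℂ (ζ x) * η y) • Matrix.of fun a b => V (a, x) (b, y) := by
  ext a b
  simp only [Rslice, Matrix.sum_apply, Matrix.smul_apply, Matrix.of_apply, smul_eq_mul]

lemma apply_rslice (V : Matrix (ι × ι) (ι × ι) ℂ) (ω : Matrix ι ι ℂ →ₗ[ℂ] ℂ)
    (ζ η : EuclideanSpace ℂ ι) : ω (Rslice V ζ η) = ⟪ζ, appM (LslF V ω) η⟫_ℂ := by
  rw [rslice_eq_sum]
  simp only [map_sum, map_smul, smul_eq_mul, PiLp.inner_apply, RCLike.inner_apply,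
    appM, LslF, Finset.sum_mul]
  refine Finset.sum_congr rfl fun x _ => Finset.sum_congr rfl fun y _ => ?_
  change _ * _ * ω (fun a b => V (a, x) (b, y)) = _
  ring

variable [DecidableEq ι]

lemma norm_rslice_le {V : Matrix (ι × ι) (ι × ι) ℂ} (hV : V.conjTranspose * V = 1)
    (ζ η : EuclideanSpace ℂ ι) : ‖Rslice V ζ η‖ ≤ ‖ζ‖ * ‖η‖ := by
  rw [Matrix.l2_opNorm_def]
  refine ContinuousLinearMap.opNorm_le_bound _ (by positivity) fun w => ?_
  set v := appM (Rslice V ζ η) w with hv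
  change ‖v‖ ≤ _
  have key : ‖v‖ * ‖v‖ ≤ ‖v‖ * (‖ζ‖ * ‖η‖ * ‖w‖) := by
    calc ‖v‖ * ‖v‖ = RCLike.re ⟪v, v⟫_ℂ := by rw [← sq, @norm_sq_eq_re_inner ℂ]
      _ ≤ ‖⟪v, v⟫_ℂ‖ := RCLike.re_le_norm _
      _ = ‖⟪tens v ζ, mact V (tens w η)⟫_ℂ‖ := by rw [hv, inner_appM_rslice]
      _ ≤ ‖tens v ζ‖ * ‖mact V (tens w η)‖ := norm_inner_le_norm _ _
      _ = ‖v‖ * (‖ζ‖ * ‖η‖ * ‖w‖) := by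
        rw [norm_mact_of_conjTranspose_mul_self hV, norm_tens, norm_tens]; ring
  rcases (norm_nonneg v).eq_or_lt with hv0 | hv0
  · rw [← hv0]; positivity
  · exact le_of_mul_le_mul_left key hv0

lemma pentagon_apply_fixed {V : Matrix (ι × ι) (ι × ι) ℂ} (hp : Pentagon V)
    {e : EuclideanSpace ℂ ι} (he : Fixed V e) (η : EuclideanSpace ℂ ι) (x y a b : ι) :
    ∑ z, ∑ c, V (x, a) (z, c) * ∑ d, V (z, b) (y, d) * (e c * η d) =
      ∑ c, ∑ d, V (a, b) (c, d) * ∑ k, V (x, c) (y, k) * (e k * η d) := by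
  -- `t = δ_y ⊗ e ⊗ η` is fixed by `V₂₃`, so the pentagon equation gives `V₁₂ V₁₃ t = V₂₃ V₁₂ t`,
  -- whose `(x, a, b)` coordinate is the claim.
  set t : ι × ι × ι → ℂ := fun p => (if p.1 = y then 1 else 0) * (e p.2.1 * η p.2.2)
  have ht : (leg23 V).mulVec t = t := by
    funext p
    have := congrArg (fun v => v (p.2.1, p.2.2)) (he η)
    simp only [mact, appM, tens, LinearMap.coe_mk, AddHom.coe_mk, Fintype.sum_prod_type] at this
    simp [t, Matrix.mulVec, dotProduct, leg23, Fintype.sum_prod_type, this]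
  have := congrFun (congrArg (fun M => M.mulVec t) hp) (x, a, b)
  simp only [← Matrix.mulVec_mulVec, ht] at this
  simpa [t, Matrix.mulVec, dotProduct, leg23, leg12, leg13, Fintype.sum_prod_type] using this

lemma rslice_single_apply (V : Matrix (ι × ι) (ι × ι) ℂ) (a : ι) (η : EuclideanSpace ℂ ι)
    (x y : ι) :
    Rslice V (EuclideanSpace.single a 1) η x y = ∑ d, V (x, a) (y, d) * η d := by
  simp [Rslice, PiLp.single_apply, mul_comm]

lemma rslice_single_mul_rslice_single {V : Matrix (ι × ι) (ι × ι) ℂ} (hp : Pentagon V)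
    {e : EuclideanSpace ℂ ι} (he : Fixed V e) (η : EuclideanSpace ℂ ι) (a b : ι) :
    Rslice V (EuclideanSpace.single a 1) e * Rslice V (EuclideanSpace.single b 1) η =
      ∑ c, ∑ d, (V (a, b) (c, d) * η d) • Rslice V (EuclideanSpace.single c 1) e := by
  ext x y
  simp only [Matrix.mul_apply, Matrix.sum_apply, Matrix.smul_apply, rslice_single_apply,
    smul_eq_mul]
  calc _ = ∑ z, ∑ c, V (x, a) (z, c) * ∑ d, V (z, b) (y, d) * (e c * η d) := by
        simp only [Finset.sum_mul_sum]
        simp only [Finset.mul_sum]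
        refine Finset.sum_congr rfl fun z _ => Finset.sum_congr rfl fun c _ =>
          Finset.sum_congr rfl fun d _ => by ring
    _ = ∑ c, ∑ d, V (a, b) (c, d) * ∑ k, V (x, c) (y, k) * (e k * η d) :=
        pentagon_apply_fixed hp he η x y a b
    _ = _ := by
        simp only [Finset.mul_sum]
        refine Finset.sum_congr rfl fun c _ => Finset.sum_congr rfl fun d _ =>
          Finset.sum_congr rfl fun k _ => by ring

lemma rslice_eq_sum_single (V : Matrix (ι × ι) (ι × ι) ℂ) (ζ η : EuclideanSpace ℂ ι) :
    Rslice V ζ η = ∑ a, starRingEnd ℂ (ζ a) • Rslice V (EuclideanSpace.single a 1) η := by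
  ext x y
  simp only [Matrix.sum_apply, Matrix.smul_apply, rslice_single_apply, smul_eq_mul, Finset.mul_sum]
  simp only [Rslice]
  refine Finset.sum_congr rfl fun a _ => Finset.sum_congr rfl fun d _ => by ring

lemma inner_tens_mact_tens_appM_lslF {V : Matrix (ι × ι) (ι × ι) ℂ} (hp : Pentagon V)
    {e : EuclideanSpace ℂ ι} (he : Fixed V e) (ω : Matrix ι ι ℂ →ₗ[ℂ] ℂ)
    (ξ ζ η : EuclideanSpace ℂ ι) :
    ⟪tens ξ ζ, mact V (tens (appM (LslF V ω) e) η)⟫_ℂ = ω (Rslice V ξ e * Rslice V ζ η) := by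
  have hPe : ∀ c, ∑ k, LslF V ω c k * e k = ω (Rslice V (EuclideanSpace.single c 1) e) :=
    fun c => by rw [apply_rslice, EuclideanSpace.inner_single_left, map_one, one_mul]; rfl
  rw [rslice_eq_sum_single V ξ, rslice_eq_sum_single V ζ, Finset.sum_mul_sum]
  simp only [smul_mul_smul_comm, rslice_single_mul_rslice_single hp he, map_sum, map_smul,
    smul_eq_mul, PiLp.inner_apply, RCLike.inner_apply, tens, mact, LinearMap.coe_mk, AddHom.coe_mk,
    appM, Fintype.sum_prod_type, hPe]
  refine Finset.sum_congr rfl fun a _ => Finset.sum_congr rfl fun b _ => ?_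
  simp only [map_mul, Finset.mul_sum, Finset.sum_mul]
  refine Finset.sum_congr rfl fun c _ => Finset.sum_congr rfl fun d _ => by ring

def IsState.toPositiveLinearMap {ω : Matrix ι ι ℂ →ₗ[ℂ] ℂ} (hω : IsState ω) :
    Matrix ι ι ℂ →ₚ[ℂ] ℂ :=
  .mk₀ ω fun M hM => by
    obtain ⟨r, hr, hωM⟩ := hω.2 M (Matrix.nonneg_iff_posSemidef.mp hM)
    rw [hωM]
    exact_mod_cast hr

theorem idempotent_state_slice_fixed_general {ι : Type*} [Fintype ι] [DecidableEq ι]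
    (V : Matrix (ι × ι) (ι × ι) ℂ) (hV : IsMU V)
    (e eHat : EuclideanSpace ℂ ι) (hm : Mult1 V e eHat)
    (ψ : Matrix ι ι ℂ →ₗ[ℂ] ℂ) (hψ : IsState ψ)
    (hid : LslF V ψ * LslF V ψ = LslF V ψ) :
    mact V (tens (appM (LslF V ψ) e) (appM (LslF V ψ) e)) =
      tens (appM (LslF V ψ) e) (appM (LslF V ψ) e) := by
  obtain ⟨-, hunitary, hpentagon⟩ := hV
  obtain ⟨-, -, hfixed, -⟩ := hm
  set f := appM (LslF V ψ) e
  have hf : appM (LslF V ψ) f = f := by rw [← appM_mul, hid]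
  have hnorm : ‖Rslice V f f‖ ≤ ‖f‖ ^ 2 := (norm_rslice_le hunitary f f).trans_eq (sq _).symm
  have hψff : ψ (Rslice V f f) = (‖f‖ ^ 2 : ℝ) := by
    rw [apply_rslice, hf, inner_self_eq_norm_sq_to_K]; push_cast; rfl
  have hψfe : ψ (Rslice V f e) = (‖f‖ ^ 2 : ℝ) := by
    rw [apply_rslice, inner_self_eq_norm_sq_to_K]; push_cast; rfl
  refine eq_of_norm_eq_of_inner_eq_norm_sq (norm_mact_of_conjTranspose_mul_self hunitary _) ?_
  calc ⟪tens f f, mact V (tens f f)⟫_ℂ = ψ (Rslice V f e * Rslice V f f) :=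
        inner_tens_mact_tens_appM_lslF hpentagon hfixed ψ f f f
    _ = (‖f‖ ^ 2 : ℝ) * ψ (Rslice V f e) :=
        hψ.toPositiveLinearMap.apply_mul_eq_of_norm_le hψ.1 hnorm hψff _
    _ = (‖tens f f‖ ^ 2 : ℝ) := by rw [hψfe, norm_tens]; push_cast; ring

/-- if `ψ` is a state with `L(ψ)` idempotent, then
`V(L(ψ)e ⊗ L(ψ)e) = L(ψ)e ⊗ L(ψ)e`. -/
theorem idempotent_state_slice_fixed {ι : Type*} [Fintype ι] [DecidableEq ι] [Nonempty ι]
    (V : Matrix (ι × ι) (ι × ι) ℂ) (hV : IsMU V)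
    (e eHat : EuclideanSpace ℂ ι) (hm : Mult1 V e eHat)
    (ψ : Matrix ι ι ℂ →ₗ[ℂ] ℂ) (hψ : IsState ψ)
    (hid : LslF V ψ * LslF V ψ = LslF V ψ) :
    mact V (tens (appM (LslF V ψ) e) (appM (LslF V ψ) e)) =
      tens (appM (LslF V ψ) e) (appM (LslF V ψ) e) :=
  idempotent_state_slice_fixed_general V hV e eHat hm ψ hψ hid

end MU
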